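/- Let a ≠ 0, W(x) = e^{-x²}[[1+a²x⁴, ax²],[ax²,1]], and let H_n be the monic Hermite polynomials. With Q_n the orthogonal polynomial sequence Q_n = diag(H_n,H_n)·V (V = ∂²[[0,1],[-1,ax²]] + ∂[[0,-4x],[0,0]] + [[4/a,-2],[0,4/a]]), the three-term recurrence x Q_n(x) = A_n Q_{n+1}(x) + C_n Q_{n-1}(x) holds, where A_n = [[1, 4a/(a²n²+a²n+4)],[0, (a²n²-a²n+4)/(a²n²+a²n+4)]] and C_n = [[n(a²n²+3a²n+2a²+4)/(2(a²n²+a²n+4)), 0],[2an/(a²n²+a²n+4), n/2]]. -/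
import Mathlib


open Matrix Polynomial

set_option maxHeartbeats 1000000 in
/-- The matrix polynomials `Q_n = diag(H_n,H_n)·V` built from the monic Hermite
polynomials (determined by `H_0 = 1`, the three-term recurrence and the derivative rule). -/
noncomputable def Q (a : ℝ) (H : ℕ → Polynomial ℝ) (n : ℕ) :
    Matrix (Fin 2) (Fin 2) (Polynomial ℝ) :=
  !![C (4/a) * H n,
     C (-2) * H n - C (4 * (n : ℝ)) * X * H (n - 1) +
       C ((n : ℝ) * ((n : ℝ) - 1)) * H (n - 2);
     -(C ((n : ℝ) * ((n : ℝ) - 1)) * H (n - 2)),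
     C (4/a) * H n + C (a * (n : ℝ) * ((n : ℝ) - 1)) * X ^ 2 * H (n - 2)]

set_option maxHeartbeats 4000000 in
/-- Three-term recurrence `x Q_n = A_n Q_{n+1} + C_n Q_{n-1}` (with `B_n = 0`),
and `x Q_0 = A_0 Q_1`. -/
theorem stmt12 (a : ℝ) (ha : a ≠ 0) (H : ℕ → Polynomial ℝ)
    (h0 : H 0 = 1)
    (hrec : ∀ n : ℕ, X * H n = H (n + 1) + C ((n : ℝ) / 2) * H (n - 1))
    (hderiv : ∀ n : ℕ, derivative (H n) = C (n : ℝ) * H (n - 1)) :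
    (∀ n : ℕ, 1 ≤ n →
      (X : Polynomial ℝ) • Q a H n =
        ((!![1, 4 * a / (a^2 * (n : ℝ)^2 + a^2 * (n : ℝ) + 4);
             0, (a^2 * (n : ℝ)^2 - a^2 * (n : ℝ) + 4) /
               (a^2 * (n : ℝ)^2 + a^2 * (n : ℝ) + 4)] :
          Matrix (Fin 2) (Fin 2) ℝ).map C) * Q a H (n + 1) +
        ((!![(n : ℝ) * (a^2 * (n : ℝ)^2 + 3 * a^2 * (n : ℝ) + 2 * a^2 + 4) /
               (2 * (a^2 * (n : ℝ)^2 + a^2 * (n : ℝ) + 4)), 0;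
             2 * a * (n : ℝ) / (a^2 * (n : ℝ)^2 + a^2 * (n : ℝ) + 4), (n : ℝ) / 2] :
          Matrix (Fin 2) (Fin 2) ℝ).map C) * Q a H (n - 1)) ∧
    (X : Polynomial ℝ) • Q a H 0 =
      ((!![1, 4 * a / 4; 0, 4 / 4] : Matrix (Fin 2) (Fin 2) ℝ).map C) * Q a H 1 := by
  have p1 : H 1 = X := by
    have h := hrec 0
    rw [h0] at h
    norm_num at h
    linear_combination -h
  have q2 : H 2 = X * H 1 - C (1/2) * H 0 := by
    have h := hrec 1
    norm_num at h
    linear_combination -h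
  have q3 : H 3 = X * H 2 - C 1 * H 1 := by
    have h := hrec 2
    norm_num at h
    rw [C_1]
    linear_combination -h
  constructor
  · intro n hn
    rcases n with _ | _ | _ | m
    · omega
    · -- n = 1
      refine Matrix.ext fun i j => ?_
      fin_cases i <;> fin_cases j <;>
      · apply Polynomial.funext
        intro x
        simp only [Q, q2, p1, h0, Matrix.smul_apply, Matrix.add_apply, Matrix.mul_apply,
          Matrix.map_apply, Fin.sum_univ_two, Fin.isValue, Matrix.cons_val', Matrix.cons_val_zero,
          Matrix.cons_val_one, Matrix.head_cons, Matrix.head_fin_const, Matrix.empty_val',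
          Matrix.cons_val_fin_one, Matrix.of_apply]
        push_cast
        simp only [eval_add, eval_sub, eval_mul, eval_neg, eval_pow, eval_C, eval_X, eval_one,
          eval_smul, smul_eq_mul]
        have hd : a^2 * (1:ℝ)^2 + a^2 * 1 + 4 ≠ 0 := by positivity
        field_simp
        ring
    · -- n = 2
      refine Matrix.ext fun i j => ?_
      fin_cases i <;> fin_cases j <;>
      · apply Polynomial.funext
        intro x
        simp only [Q, q3, q2, p1, h0, Matrix.smul_apply, Matrix.add_apply, Matrix.mul_apply,
          Matrix.map_apply, Fin.sum_univ_two, Fin.isValue, Matrix.cons_val', Matrix.cons_val_zero,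
          Matrix.cons_val_one, Matrix.head_cons, Matrix.head_fin_const, Matrix.empty_val',
          Matrix.cons_val_fin_one, Matrix.of_apply]
        push_cast
        simp only [eval_add, eval_sub, eval_mul, eval_neg, eval_pow, eval_C, eval_X, eval_one,
          eval_smul, smul_eq_mul]
        have hd : a^2 * (2:ℝ)^2 + a^2 * 2 + 4 ≠ 0 := by positivity
        field_simp
        ring
    · -- n = m + 3
      have hd : a^2 * ((m:ℝ)+3)^2 + a^2 * ((m:ℝ)+3) + 4 ≠ 0 := by positivity
      have p2 : H (m+2) = X * H (m+1) - C (((m:ℝ)+1)/2) * H m := by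
        have h := hrec (m+1)
        push_cast at h
        rw [show m+1+1 = m+2 from rfl] at h
        linear_combination -h
      have p3 : H (m+3) = X * H (m+2) - C (((m:ℝ)+2)/2) * H (m+1) := by
        have h := hrec (m+2)
        push_cast at h
        rw [show m+2+1 = m+3 from rfl] at h
        linear_combination -h
      have p4 : H (m+4) = X * H (m+3) - C (((m:ℝ)+3)/2) * H (m+2) := by
        have h := hrec (m+3)
        push_cast at h
        rw [show m+3+1 = m+4 from rfl] at h
        linear_combination -h
      refine Matrix.ext fun i j => ?_
      fin_cases i <;> fin_cases j <;>
      · apply Polynomial.funext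
        intro x
        simp only [show m+3-1 = m+2 from rfl, show m+3+1 = m+4 from rfl,
          show m+3-2 = m+1 from rfl, show m+4-1 = m+3 from rfl, show m+4-2 = m+2 from rfl,
          show m+2-1 = m+1 from rfl, show m+2-2 = m from rfl, Q, Matrix.smul_apply,
          Matrix.add_apply, Matrix.mul_apply, Matrix.map_apply, Fin.sum_univ_two,
          Fin.isValue, Matrix.cons_val', Matrix.cons_val_zero, Matrix.cons_val_one,
          Matrix.head_cons, Matrix.head_fin_const, Matrix.empty_val',
          Matrix.cons_val_fin_one, Matrix.of_apply, p4, p3, p2]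
        push_cast
        simp only [eval_add, eval_sub, eval_mul, eval_neg, eval_pow, eval_C, eval_X, eval_smul,
          smul_eq_mul]
        field_simp
        ring
  · -- n = 0 case
    refine Matrix.ext fun i j => ?_
    fin_cases i <;> fin_cases j <;>
    · apply Polynomial.funext
      intro x
      simp only [Q, p1, h0, Matrix.smul_apply, Matrix.add_apply, Matrix.mul_apply,
        Matrix.map_apply, Fin.sum_univ_two, Fin.isValue, Matrix.cons_val', Matrix.cons_val_zero,
        Matrix.cons_val_one, Matrix.head_cons, Matrix.head_fin_const, Matrix.empty_val',
        Matrix.cons_val_fin_one, Matrix.of_apply]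
      push_cast
      simp only [eval_add, eval_sub, eval_mul, eval_neg, eval_pow, eval_C, eval_X, eval_one,
        eval_smul, smul_eq_mul]
      try field_simp
      try ring
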